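/- arXiv:1211.0463 — 2 statements merged into one kernel-verified Lean document; each statement's English description precedes it below -/
import Mathlib

section
/- If G is a nice finite simple graph, then χ_σ^e(G) ≤ 4: for every linear order on E(G) there exists an edge weighting w : E(G) → {1,2,3,4} whose induced sequence colouring of the vertices is proper. -/
/-!
Common definitions: sequence colourings induced by an edge weighting and a linear
order on the edge set of a finite simple graph.
-/

open Finset

variable {V : Type*}

/-- The list of edges incident to `v`, sorted in increasing order with respect to the
linear order `σ` on `E(G)`. -/
noncomputable def incEdges [Fintype V] [DecidableEq V] (G : SimpleGraph V) [DecidableRel G.Adj]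
    (σ : LinearOrder G.edgeSet) (v : V) : List G.edgeSet :=
  letI := σ
  ((Finset.univ : Finset G.edgeSet).filter (fun e : G.edgeSet => v ∈ (e : Sym2 V))).sort σ.le

/-- The induced sequence colouring: `c(v)` is the list of weights `w(e)` of the edges `e`
incident to `v`, written in increasing order of `e` with respect to `σ`. -/
noncomputable def seqColor [Fintype V] [DecidableEq V] (G : SimpleGraph V) [DecidableRel G.Adj]
    (σ : LinearOrder G.edgeSet) {α : Type*} (w : G.edgeSet → α) (v : V) : List α :=
  (incEdges G σ v).map w

/-- The induced sequence colouring is proper: adjacent vertices receive distinct sequences. -/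
def ProperSeq [Fintype V] [DecidableEq V] (G : SimpleGraph V) [DecidableRel G.Adj]
    (σ : LinearOrder G.edgeSet) (w : G.edgeSet → ℝ) : Prop :=
  ∀ u v : V, G.Adj u v → seqColor G σ w u ≠ seqColor G σ w v

/-- A graph is nice if no connected component is isomorphic to `K₂`; equivalently,
no edge has both of its endpoints of degree `1`. -/
def Nice [Fintype V] [DecidableEq V] (G : SimpleGraph V) [DecidableRel G.Adj] : Prop :=
  ∀ u v : V, G.Adj u v → 2 ≤ G.degree u ∨ 2 ≤ G.degree v

/-!
Adjacent vertices with equal colour sequences have the same degree `d`, and `d ≥ 2` since `G` is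
nice. For each edge `uv` of this kind we pick a position (`sepIndex`) at which the lists of `u` and
`v` hold distinct edges `a ≠ b`; it suffices to make `w a ≠ w b`. Charge this constraint to the
`σ`-smaller of `a` and `b`. An edge `f` is charged at most three times: once through the edge `f`
itself, and once for each endpoint `x` of `f`, through the edge that follows `f` cyclically in the
list of `x`. Weighting the edges greedily from the `σ`-largest down, every edge then has at most
three forbidden weights, so four weights suffice.
-/

theorem exists_coloring_of_ncard_lt {α β : Type*} [Fintype α] [LinearOrder α] [DecidableEq β]
    {Q : α → α → Prop} (hQ : ∀ a b, Q a b → a < b) (S : Finset β)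
    (hS : ∀ a, {b | Q a b}.ncard < #S) :
    ∃ c : α → β, (∀ a, c a ∈ S) ∧ ∀ a b, Q a b → c a ≠ c b := by
  classical
  rcases isEmpty_or_nonempty α with hα | ⟨⟨a₀⟩⟩
  · exact ⟨isEmptyElim, isEmptyElim, isEmptyElim⟩
  obtain ⟨x₀, hx₀⟩ := Finset.card_pos.1 ((Nat.zero_le _).trans_lt (hS a₀))
  suffices ∀ s : Finset α, ∃ c : α → β, (∀ a, c a ∈ S) ∧
      ∀ a ∈ s, ∀ b ∈ s, Q a b → c a ≠ c b by
    obtain ⟨c, hcS, hc⟩ := this univ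
    exact ⟨c, hcS, fun a b h => hc a (mem_univ a) b (mem_univ b) h⟩
  intro s
  induction s using Finset.induction_on_min with
  | empty => exact ⟨fun _ => x₀, fun _ => hx₀, by simp⟩
  | insert a s ha_min ih =>
    obtain ⟨c, hcS, hc⟩ := ih
    have hused : #((s.filter (Q a)).image c) < #S := calc
      #((s.filter (Q a)).image c) ≤ #(s.filter (Q a)) := card_image_le
      _ = (↑(s.filter (Q a)) : Set α).ncard := (Set.ncard_coe_finset _).symm
      _ ≤ {b | Q a b}.ncard := Set.ncard_le_ncard (by intro b; simp +contextual)
      _ < #S := hS a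
    obtain ⟨x, hxS, hx⟩ := exists_mem_notMem_of_card_lt_card hused
    have hne : ∀ b ∈ s, b ≠ a := fun b hb => (ha_min b hb).ne'
    refine ⟨Function.update c a x, fun b => ?_, ?_⟩
    · rcases eq_or_ne b a with rfl | hb
      · simpa using hxS
      · simpa [hb] using hcS b
    simp only [mem_insert]
    rintro p (rfl | hp) q (rfl | hq) hpq
    · exact absurd (hQ _ _ hpq) (lt_irrefl _)
    · rw [Function.update_self, Function.update_of_ne (hne q hq)]
      exact fun h => hx (mem_image.2 ⟨q, mem_filter.2 ⟨hq, hpq⟩, h.symm⟩)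
    · exact absurd (hQ _ _ hpq) (ha_min p hp).not_gt
    · rw [Function.update_of_ne (hne p hp), Function.update_of_ne (hne q hq)]
      exact hc p hp q hq hpq

section Rank

variable [Fintype V] [DecidableEq V] (G : SimpleGraph V) [DecidableRel G.Adj]
  (σ : LinearOrder G.edgeSet)

noncomputable def rank (u : V) (e : G.edgeSet) : ℕ := (incEdges G σ u).idxOf e

variable {G σ}

theorem mem_incEdges {u : V} {e : G.edgeSet} : e ∈ incEdges G σ u ↔ u ∈ (e : Sym2 V) := by
  simp [incEdges]

theorem nodup_incEdges (u : V) : (incEdges G σ u).Nodup :=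
  sort_nodup _ _

-- `<` on `G.edgeSet` would resolve to Mathlib's partial order on `Sym2 V`, so the order `σ` is
-- always named explicitly, as in `σ.lt`.
theorem pairwise_lt_incEdges (u : V) : (incEdges G σ u).Pairwise σ.lt :=
  ((pairwise_sort _ _).and (nodup_incEdges u)).imp fun h =>
    @lt_of_le_of_ne _ σ.toPartialOrder _ _ h.1 h.2

theorem length_incEdges (u : V) : (incEdges G σ u).length = G.degree u := by
  rw [incEdges, length_sort, ← G.card_incidenceFinset_eq_degree]
  refine card_bij (fun e _ => (e : Sym2 V)) ?_ (fun _ _ _ _ => Subtype.ext) ?_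
  · intro e he
    exact (G.mem_incidenceFinset _ _).2 ⟨e.2, (mem_filter.1 he).2⟩
  · intro z hz
    rw [G.mem_incidenceFinset] at hz
    exact ⟨⟨z, hz.1⟩, mem_filter.2 ⟨mem_univ _, hz.2⟩, rfl⟩

theorem rank_lt_length {u : V} {e : G.edgeSet} (h : u ∈ (e : Sym2 V)) :
    rank G σ u e < (incEdges G σ u).length :=
  List.idxOf_lt_length_iff.2 (mem_incEdges.2 h)

theorem rank_lt_degree {u : V} {e : G.edgeSet} (h : u ∈ (e : Sym2 V)) :
    rank G σ u e < G.degree u :=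
  length_incEdges (σ := σ) u ▸ rank_lt_length h

theorem rank_inj {u : V} {a b : G.edgeSet} (ha : u ∈ (a : Sym2 V)) :
    rank G σ u a = rank G σ u b ↔ a = b :=
  List.idxOf_inj (mem_incEdges.2 ha)

theorem exists_rank_eq {u : V} {k : ℕ} (hk : k < G.degree u) :
    ∃ e : G.edgeSet, u ∈ (e : Sym2 V) ∧ rank G σ u e = k := by
  rw [← length_incEdges (σ := σ)] at hk
  exact ⟨_, mem_incEdges.1 (List.getElem_mem hk),
    (nodup_incEdges u).idxOf_getElem k hk⟩

theorem lt_of_rank_lt {u : V} {a b : G.edgeSet} (ha : u ∈ (a : Sym2 V)) (hb : u ∈ (b : Sym2 V))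
    (h : rank G σ u a < rank G σ u b) : σ.lt a b := by
  have := List.pairwise_iff_getElem.1 (pairwise_lt_incEdges u) _ _
    (rank_lt_length ha) (rank_lt_length hb) h
  simpa only [rank, List.getElem_idxOf] using this

theorem getElem?_seqColor_rank {α : Type*} (w : G.edgeSet → α) {u : V} {e : G.edgeSet}
    (h : u ∈ (e : Sym2 V)) : (seqColor G σ w u)[rank G σ u e]? = some (w e) := by
  rw [seqColor, List.getElem?_map, rank, List.getElem?_idxOf (mem_incEdges.2 h), Option.map_some]

end Rank

/-- For an edge `uv` at position `p` in the list of `u` and `q` in the list of `v`: if `p ≠ q`,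
position `max p q` holds `uv` in exactly one of the two lists; if `p = q`, the cyclically
preceding position holds it in neither. Either way the two lists differ at that position. -/
def sepIndex (d p q : ℕ) : ℕ :=
  if p = q then (if p = 0 then d - 1 else p - 1) else max p q

section SepIndex

variable {d p q : ℕ}

theorem sepIndex_comm (d p q : ℕ) : sepIndex d p q = sepIndex d q p := by
  unfold sepIndex; split_ifs <;> omega

theorem sepIndex_of_ne (h : p ≠ q) : sepIndex d p q = max p q := if_neg h

theorem sepIndex_lt (hp : p < d) (hq : q < d) : sepIndex d p q < d := by
  unfold sepIndex; split_ifs <;> omega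

theorem sepIndex_self_ne (hd : 2 ≤ d) : sepIndex d p p ≠ p := by
  unfold sepIndex; split_ifs <;> omega

theorem eq_of_sepIndex_self_eq (hp : p < d) (hq : q < d)
    (h : sepIndex d p p = sepIndex d q q) : p = q := by
  unfold sepIndex at h; split_ifs at h <;> omega

end SepIndex

section SepPair

variable [Fintype V] [DecidableEq V] (G : SimpleGraph V) [DecidableRel G.Adj]
  (σ : LinearOrder G.edgeSet)

structure SepAt (u v : V) (e f b : G.edgeSet) : Prop where
  edge_eq : (e : Sym2 V) = s(u, v)
  mem_left : u ∈ (f : Sym2 V)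
  mem_right : v ∈ (b : Sym2 V)
  rank_left : rank G σ u f = sepIndex (G.degree u) (rank G σ u e) (rank G σ v e)
  rank_right : rank G σ v b = sepIndex (G.degree u) (rank G σ u e) (rank G σ v e)

def SepPair (f b : G.edgeSet) : Prop :=
  σ.lt f b ∧ ∃ u v e, SepAt G σ u v e f b

variable {G σ} {u v : V}

theorem SepAt.symm {e f b : G.edgeSet} (h : SepAt G σ u v e f b)
    (hdeg : G.degree u = G.degree v) : SepAt G σ v u e b f := by
  obtain ⟨he, huf, hvb, hf, hb⟩ := h
  refine ⟨he.trans Sym2.eq_swap, hvb, huf, ?_, ?_⟩ <;>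
    rwa [← hdeg, sepIndex_comm]

theorem exists_sepAt_ne (huv : G.Adj u v) (hdeg : G.degree u = G.degree v)
    (h2 : 2 ≤ G.degree u) : ∃ e a b, SepAt G σ u v e a b ∧ a ≠ b := by
  let e : G.edgeSet := ⟨s(u, v), huv⟩
  have hue : u ∈ (e : Sym2 V) := Sym2.mem_mk_left u v
  have hve : v ∈ (e : Sym2 V) := Sym2.mem_mk_right u v
  have hk := sepIndex_lt (rank_lt_degree (σ := σ) hue)
    ((rank_lt_degree (σ := σ) hve).trans_eq hdeg.symm)
  obtain ⟨a, hua, ha⟩ := exists_rank_eq (σ := σ) hk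
  obtain ⟨b, hvb, hb⟩ := exists_rank_eq (σ := σ) (hk.trans_eq hdeg)
  refine ⟨e, a, b, ⟨rfl, hua, hvb, ha, hb⟩, ?_⟩
  rintro rfl
  have hae : a = e := Subtype.ext ((Sym2.mem_and_mem_iff (G.ne_of_adj huv)).1 ⟨hua, hvb⟩)
  subst hae
  have hpq : rank G σ u e = rank G σ v e := ha.trans hb.symm
  rw [← hpq] at ha
  exact sepIndex_self_ne h2 ha.symm

theorem exists_sepPair_of_adj (huv : G.Adj u v) (hdeg : G.degree u = G.degree v)
    (h2 : 2 ≤ G.degree u) : ∃ a b : G.edgeSet, u ∈ (a : Sym2 V) ∧ v ∈ (b : Sym2 V) ∧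
      rank G σ u a = rank G σ v b ∧ (SepPair G σ a b ∨ SepPair G σ b a) := by
  obtain ⟨e, a, b, hsep, hab⟩ := exists_sepAt_ne (σ := σ) huv hdeg h2
  refine ⟨a, b, hsep.mem_left, hsep.mem_right, hsep.rank_left.trans hsep.rank_right.symm, ?_⟩
  rcases @lt_or_gt_of_ne _ σ _ _ hab with hlt | hlt
  · exact Or.inl ⟨hlt, u, v, e, hsep⟩
  · exact Or.inr ⟨hlt, v, u, e, hsep.symm hdeg⟩

end SepPair

section Charging

variable [Fintype V] [DecidableEq V] {G : SimpleGraph V} [DecidableRel G.Adj]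
  {σ : LinearOrder G.edgeSet} {u v : V} {e f b : G.edgeSet}

theorem SepAt.rank_lt_of_self (h : SepAt G σ u v f f b) (hfb : σ.lt f b) :
    rank G σ v f < rank G σ u f ∧ rank G σ v b = rank G σ u f := by
  obtain ⟨he, huf, hvb, hf, hb⟩ := h
  have hvf : v ∈ (f : Sym2 V) := he ▸ Sym2.mem_mk_right u v
  by_cases hpq : rank G σ u f = rank G σ v f
  · have hbf : b = f := (rank_inj hvb).1 (by rw [hb, ← hf, hpq])
    exact absurd (hbf ▸ hfb) (@lt_irrefl _ σ.toPreorder f)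
  · rw [sepIndex_of_ne hpq] at hf hb
    omega

theorem SepAt.rank_eq_of_ne (h : SepAt G σ u v e f b) (hfb : σ.lt f b) (hef : e ≠ f) :
    rank G σ u e = rank G σ v e := by
  obtain ⟨he, huf, hvb, hf, hb⟩ := h
  have hue : u ∈ (e : Sym2 V) := he ▸ Sym2.mem_mk_left u v
  have hve : v ∈ (e : Sym2 V) := he ▸ Sym2.mem_mk_right u v
  by_contra hpq
  rw [sepIndex_of_ne hpq] at hf hb
  have hfe : rank G σ u f ≠ rank G σ u e := fun h => hef ((rank_inj huf).1 h).symm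
  have hbe : b = e := (rank_inj (σ := σ) hvb).1 (by omega)
  have hef' : σ.lt e f := lt_of_rank_lt hue huf (by omega)
  exact @lt_asymm _ σ.toPreorder _ _ hef' (hbe ▸ hfb)

theorem SepAt.eq_of_self {u' v' : V} {b' : G.edgeSet} (h : SepAt G σ u v f f b)
    (h' : SepAt G σ u' v' f f b') (hfb : σ.lt f b) (hfb' : σ.lt f b') : b = b' := by
  obtain ⟨hlt, hb⟩ := h.rank_lt_of_self hfb
  obtain ⟨hlt', hb'⟩ := h'.rank_lt_of_self hfb'
  rcases Sym2.eq_iff.1 (h.edge_eq.symm.trans h'.edge_eq) with ⟨rfl, rfl⟩ | ⟨rfl, rfl⟩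
  · exact (rank_inj h.mem_right).1 (hb.trans hb'.symm)
  · omega

theorem SepAt.eq_of_ne {v' : V} {e' b' : G.edgeSet} (h : SepAt G σ u v e f b)
    (h' : SepAt G σ u v' e' f b') (hfb : σ.lt f b) (hfb' : σ.lt f b') (hef : e ≠ f)
    (hef' : e' ≠ f) : b = b' := by
  have hue : u ∈ (e : Sym2 V) := h.edge_eq ▸ Sym2.mem_mk_left u v
  have hue' : u ∈ (e' : Sym2 V) := h'.edge_eq ▸ Sym2.mem_mk_left u v'
  have hrank : rank G σ u e = rank G σ u e' := by
    refine eq_of_sepIndex_self_eq (rank_lt_degree hue) (rank_lt_degree hue') ?_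
    have hf := h.rank_left
    have hf' := h'.rank_left
    rw [← h.rank_eq_of_ne hfb hef] at hf
    rw [← h'.rank_eq_of_ne hfb' hef'] at hf'
    exact hf.symm.trans hf'
  obtain rfl := (rank_inj hue).1 hrank
  obtain rfl := Sym2.congr_right.1 (h.edge_eq.symm.trans h'.edge_eq)
  exact (rank_inj h.mem_right).1 (h.rank_right.trans h'.rank_right.symm)

theorem ncard_sepPair_le (f : G.edgeSet) : {b | SepPair G σ f b}.ncard ≤ 3 := by
  obtain ⟨⟨x, y⟩, hxy⟩ := Sym2.mk_surjective (f : Sym2 V)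
  rw [Function.uncurry_apply_pair] at hxy
  let viaSelf := {b | σ.lt f b ∧ ∃ u v, SepAt G σ u v f f b}
  let viaEnd (z : V) := {b | σ.lt f b ∧ ∃ v e, e ≠ f ∧ SepAt G σ z v e f b}
  have hsub : {b | SepPair G σ f b} ⊆ viaSelf ∪ viaEnd x ∪ viaEnd y := by
    rintro b ⟨hfb, u, v, e, h⟩
    by_cases hef : e = f
    · subst hef
      exact Or.inl (Or.inl ⟨hfb, u, v, h⟩)
    · have hu : u ∈ s(x, y) := hxy ▸ h.mem_left
      rcases Sym2.mem_iff.1 hu with rfl | rfl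
      · exact Or.inl (Or.inr ⟨hfb, v, e, hef, h⟩)
      · exact Or.inr ⟨hfb, v, e, hef, h⟩
  have hself : viaSelf.ncard ≤ 1 := (Set.ncard_le_one (Set.toFinite _)).2
    fun _ ⟨hfb, _, _, h⟩ _ ⟨hfb', _, _, h'⟩ => h.eq_of_self h' hfb hfb'
  have hend (z : V) : (viaEnd z).ncard ≤ 1 := (Set.ncard_le_one (Set.toFinite _)).2
    fun _ ⟨hfb, _, _, hef, h⟩ _ ⟨hfb', _, _, hef', h'⟩ => h.eq_of_ne h' hfb hfb' hef hef'
  calc {b | SepPair G σ f b}.ncard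
      ≤ (viaSelf ∪ viaEnd x ∪ viaEnd y).ncard := Set.ncard_le_ncard hsub
    _ ≤ viaSelf.ncard + (viaEnd x).ncard + (viaEnd y).ncard :=
        (Set.ncard_union_le _ _).trans (Nat.add_le_add_right (Set.ncard_union_le _ _) _)
    _ ≤ 3 := by linarith [hend x, hend y]

end Charging

theorem eq_of_seqColor_eq [Fintype V] [DecidableEq V] {G : SimpleGraph V}
    [DecidableRel G.Adj] {σ : LinearOrder G.edgeSet} {α : Type*} {w : G.edgeSet → α} {u v : V}
    {a b : G.edgeSet} (hseq : seqColor G σ w u = seqColor G σ w v) (ha : u ∈ (a : Sym2 V))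
    (hb : v ∈ (b : Sym2 V)) (hab : rank G σ u a = rank G σ v b) : w a = w b := by
  have := getElem?_seqColor_rank (σ := σ) w ha
  rwa [hseq, hab, getElem?_seqColor_rank w hb, Option.some_inj, eq_comm] at this

/-- If `G` is nice then `χ_σ^e(G) ≤ 4`: for every linear order on `E(G)` there is an edge
weighting with weights in `{1,2,3,4}` whose induced sequence colouring is proper. -/
theorem stmt_4 [Fintype V] [DecidableEq V] (G : SimpleGraph V) [DecidableRel G.Adj]
    (hnice : Nice G) (σ : LinearOrder G.edgeSet) :
    ∃ w : G.edgeSet → ℝ, (∀ e, w e ∈ ({1, 2, 3, 4} : Set ℝ)) ∧ ProperSeq G σ w := by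
  obtain ⟨w, hw4, hw⟩ := @exists_coloring_of_ncard_lt _ _ _ σ _ (SepPair G σ)
    (fun _ _ h => h.1) ({1, 2, 3, 4} : Finset ℝ)
    fun f => (ncard_sepPair_le f).trans_lt (by norm_num)
  refine ⟨w, fun e => by simpa using hw4 e, fun u v huv hseq => ?_⟩
  have hdeg : G.degree u = G.degree v := by
    simpa only [seqColor, List.length_map, length_incEdges] using congrArg List.length hseq
  have h2 : 2 ≤ G.degree u := by
    rcases hnice u v huv with h | h <;> omega
  obtain ⟨a, b, hua, hvb, hab, hsep⟩ := exists_sepPair_of_adj (σ := σ) huv hdeg h2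
  have hwab := eq_of_seqColor_eq hseq hua hvb hab
  rcases hsep with h | h
  · exact hw a b h hwab
  · exact hw b a h hwab.symm
end

section
/- Let G be a finite simple graph with minimum degree δ and maximum degree Δ. If δ > log_2(e·(2Δ² − 2Δ + 1)), where e is Euler's number, then ch_σ^t(G) ≤ 2: for every linear order on the disjoint union V(G) ∪ E(G) and every assignment to each vertex and each edge of a set of two real numbers, there exists a total weighting taking each weight from its assigned set whose induced total sequence colouring of the vertices is proper. -/
/-!
Common definitions: total sequence colourings induced by a total weighting and a linear
order on the disjoint union `V(G) ⊕ E(G)` of a finite simple graph.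
-/

open Finset

variable {V : Type*}

/-- The elements of `V(G) ⊕ E(G)` relevant to the vertex `v` (namely `v` itself together
with the edges incident to `v`), sorted in increasing order with respect to the linear
order `σ` on `V(G) ⊕ E(G)`. -/
noncomputable def incTotal [Fintype V] [DecidableEq V] (G : SimpleGraph V) [DecidableRel G.Adj]
    (σ : LinearOrder (V ⊕ G.edgeSet)) (v : V) : List (V ⊕ G.edgeSet) :=
  letI := σ
  letI : DecidablePred (fun x : V ⊕ G.edgeSet =>
      Sum.elim (fun u : V => u = v) (fun e : G.edgeSet => v ∈ (e : Sym2 V)) x) :=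
    Classical.decPred _
  ((Finset.univ : Finset (V ⊕ G.edgeSet)).filter
    (fun x : V ⊕ G.edgeSet =>
      Sum.elim (fun u : V => u = v) (fun e : G.edgeSet => v ∈ (e : Sym2 V)) x)).sort σ.le

/-- The induced total sequence colouring: `c(v)` consists of `w(v)` together with the
weights `w(e)` of the edges `e` incident to `v`, all written in increasing order with
respect to `σ`. -/
noncomputable def totalSeqColor [Fintype V] [DecidableEq V] (G : SimpleGraph V)
    [DecidableRel G.Adj] (σ : LinearOrder (V ⊕ G.edgeSet)) (w : V ⊕ G.edgeSet → ℝ) (v : V) :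
    List ℝ :=
  (incTotal G σ v).map w

/-- The induced total sequence colouring is proper: adjacent vertices receive distinct
sequences. -/
def ProperTotalSeq [Fintype V] [DecidableEq V] (G : SimpleGraph V) [DecidableRel G.Adj]
    (σ : LinearOrder (V ⊕ G.edgeSet)) (w : V ⊕ G.edgeSet → ℝ) : Prop :=
  ∀ u v : V, G.Adj u v → totalSeqColor G σ w u ≠ totalSeqColor G σ w v


/-!
Choose every weight independently and uniformly from its two-element list, so that the sample
space is the finite product `Π x, L x` and probabilities are densities of finsets. For an edge
`uv`, the sequences `c(u)` and `c(v)` have the same length only if `deg u = deg v`, and the only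
element of `V ∪ E` that they both read is `uv` itself; so `c(u) = c(v)` forces at least
`deg u ≥ δ` coincidences `w(a) = w(b)` between distinct elements, each of which halves the
probability: the clash at `uv` has probability at most `2^(-δ)`.

The clash at `uv` only depends on the weights at `u`, `v` and the edges incident to them, so it is
independent of the clashes at all edges but those meeting a vertex outside `{u, v}` adjacent to
`u` or `v`; there are at most `2(Δ - 1) · Δ` of these. The hypothesis says exactly that
`e · 2^(-δ) · (2Δ(Δ - 1) + 1) < 1`, so the symmetric Lovász Local Lemma, which on a finite
product space is a counting argument, yields a weighting without clashes.
-/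

open Function

section ProductSpace

variable {ι : Type*} {κ : ι → Type*} [DecidableEq ι] [∀ i, Fintype (κ i)]

theorem card_filter_mul_card_le_of_dependsOn {C : Finset (∀ i, κ i)} {I : Set ι}
    (hC : DependsOn (· ∈ C) I) {a : ι} (ha : a ∉ I) (p : (∀ i, κ i) → Prop) [DecidablePred p]
    (hp : ∀ ω x y, p (update ω a x) → p (update ω a y) → x = y) :
    #{ω ∈ C | p ω} * Fintype.card (κ a) ≤ #C := by
  rw [← card_univ, ← card_product]
  refine card_le_card_of_injOn (fun ωx ↦ update ωx.1 a ωx.2) (fun ⟨ω, x⟩ h ↦ ?_) ?_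
  · simp only [coe_product, Set.mem_prod, mem_coe, mem_filter] at h
    refine (hC fun i hi ↦ ?_).mp h.1.1
    exact (update_of_ne (ne_of_mem_of_not_mem hi ha) _ _).symm
  · rintro ⟨ω, x⟩ h ⟨ω', x'⟩ h' heq
    simp only [coe_product, Set.mem_prod, mem_coe, mem_filter] at h h'
    have hx : x = x' := by simpa using congrFun heq a
    have hoff : ∀ i ≠ a, ω i = ω' i := fun i hi ↦ by
      simpa [update_of_ne hi] using congrFun heq i
    have hω' : update ω a (ω' a) = ω' := by
      ext i
      by_cases hi : i = a
      · subst hi; simp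
      · simp [update_of_ne hi, hoff i hi]
    have hωa : ω a = ω' a := hp ω _ _ (by simpa using h.1.2) (by rw [hω']; exact h'.1.2)
    rw [hx, ← hω', ← hωa, update_eq_self]

theorem card_filter_apply_eq_mul_card_le_of_dependsOn {β : Type*} [DecidableEq β]
    {C : Finset (∀ i, κ i)} {I : Set ι} (hC : DependsOn (· ∈ C) I) {a b : ι} (ha : a ∉ I)
    (hba : b ≠ a) {g : ∀ i, κ i → β} (hg : Injective (g a)) :
    #{ω ∈ C | g a (ω a) = g b (ω b)} * Fintype.card (κ a) ≤ #C :=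
  card_filter_mul_card_le_of_dependsOn hC ha _ fun ω x y hx hy ↦ hg <| by
    simp only [update_self, update_of_ne hba] at hx hy
    exact hx.trans hy.symm

variable [Fintype ι]

theorem card_inter_mul_card_eq_of_dependsOn [∀ i, DecidableEq (κ i)] {E F : Finset (∀ i, κ i)}
    {I J : Set ι} (hE : DependsOn (· ∈ E) I) (hF : DependsOn (· ∈ F) J) (hIJ : Disjoint I J) :
    #(E ∩ F) * Fintype.card (∀ i, κ i) = #E * #F := by
  classical
  -- Under `P`, `E` becomes `E' × univ` and `F` becomes `univ × F'`, since `J ⊆ Iᶜ`.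
  let P := Equiv.piEquivPiSubtypeProd (· ∈ I) κ
  let E' := E.image fun ω ↦ (P ω).1
  let F' := F.image fun ω ↦ (P ω).2
  have glue_left : ∀ ω f g, (P ω).1 = f → ∀ i ∈ I, ω i = P.symm (f, g) i := by
    rintro ω f g rfl i hi
    simp [P, hi]
  have glue_right : ∀ ω f g, (P ω).2 = g → ∀ i ∈ J, ω i = P.symm (f, g) i := by
    rintro ω f g rfl i hi
    simp [P, hIJ.notMem_of_mem_right hi]
  have hE' : E.map P.toEmbedding = E' ×ˢ univ := by
    ext ⟨f, g⟩
    simp only [mem_map_equiv, mem_product, mem_univ, and_true, E', mem_image]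
    exact ⟨fun h ↦ ⟨_, h, by simp⟩, fun ⟨ω, hω, hf⟩ ↦ (hE (glue_left ω f g hf)).mp hω⟩
  have hF' : F.map P.toEmbedding = univ ×ˢ F' := by
    ext ⟨f, g⟩
    simp only [mem_map_equiv, mem_product, mem_univ, true_and, F', mem_image]
    exact ⟨fun h ↦ ⟨_, h, by simp⟩, fun ⟨ω, hω, hg⟩ ↦ (hF (glue_right ω f g hg)).mp hω⟩
  have hEF' : (E ∩ F).map P.toEmbedding = E' ×ˢ F' := by
    ext ⟨f, g⟩
    simp only [mem_map_equiv, mem_product, mem_inter, E', F', mem_image]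
    refine ⟨fun h ↦ ⟨⟨_, h.1, by simp⟩, ⟨_, h.2, by simp⟩⟩, ?_⟩
    rintro ⟨⟨ω, hω, hf⟩, ⟨ω', hω', hg⟩⟩
    exact ⟨(hE (glue_left ω f g hf)).mp hω, (hF (glue_right ω' f g hg)).mp hω'⟩
  simp only [← card_map P.toEmbedding, hE', hF', hEF', Fintype.card_congr P, card_product,
    card_univ, Fintype.card_prod]
  ring

theorem dens_inter_of_dependsOn [∀ i, DecidableEq (κ i)] {E F : Finset (∀ i, κ i)} {I J : Set ι}
    (hE : DependsOn (· ∈ E) I) (hF : DependsOn (· ∈ F) J) (hIJ : Disjoint I J) :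
    (E ∩ F).dens = E.dens * F.dens := by
  have h := card_inter_mul_card_eq_of_dependsOn hE hF hIJ
  simp only [dens]
  rcases Nat.eq_zero_or_pos (Fintype.card (∀ i, κ i)) with h0 | hpos
  · simp [h0]
  · field_simp
    exact_mod_cast h

/-- If at most one coordinate occurs both among the `a t` and among the `b t`, then every
equation `g (ω (a t)) = g (ω (b t))` with `t ∈ P` involves a coordinate not occurring in the
earlier ones, and so cuts the number of solutions by a factor `q`. -/
theorem card_filter_forall_eq_mul_pow_le {β : Type*} [DecidableEq β] {τ : Type*} {a b : τ → ι}
    (ha : Injective a) (hb : Injective b) (hab : ∀ s t s' t', a s = b t → a s' = b t' → a s = a s')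
    {g : ∀ i, κ i → β} (hg : ∀ i, Injective (g i)) {q : ℕ} (hq : ∀ i, q ≤ Fintype.card (κ i))
    (P : Finset τ) (hP : ∀ t ∈ P, a t ≠ b t) :
    #{ω : ∀ i, κ i | ∀ t ∈ P, g _ (ω (a t)) = g _ (ω (b t))} * q ^ #P ≤
      Fintype.card (∀ i, κ i) := by
  classical
  induction P using Finset.induction_on with
  | empty => simp [card_univ]
  | insert t P ht IH =>
    set C : Finset (∀ i, κ i) := {ω : ∀ i, κ i | ∀ s ∈ P, g _ (ω (a s)) = g _ (ω (b s))}
    set I : Set ι := {i | ∃ s ∈ P, i = a s ∨ i = b s}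
    have hC : DependsOn (· ∈ C) I := by
      intro ω ω' h
      simp only [C, mem_filter, mem_univ, true_and, eq_iff_iff]
      refine forall₂_congr fun s hs ↦ ?_
      rw [h _ ⟨s, hs, .inl rfl⟩, h _ ⟨s, hs, .inr rfl⟩]
    have hfresh : a t ∉ I ∨ b t ∉ I := by
      by_contra! h
      obtain ⟨⟨s, hs, hs' | hs'⟩, ⟨s', hs'', hs''' | hs'''⟩⟩ := h
      · exact ht (ha hs' ▸ hs)
      · exact ht (ha hs' ▸ hs)
      · exact ht (ha (hab t s s' t hs' hs'''.symm) ▸ hs'')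
      · exact ht (hb hs''' ▸ hs'')
    have hhalf : #{ω ∈ C | g _ (ω (a t)) = g _ (ω (b t))} * q ≤ #C := by
      have hPt := hP t (mem_insert_self t P)
      rcases hfresh with hat | hbt
      · exact (Nat.mul_le_mul_left _ (hq _)).trans <|
          card_filter_apply_eq_mul_card_le_of_dependsOn hC hat hPt.symm (hg _)
      · simp_rw [eq_comm (a := g (a t) _)]
        exact (Nat.mul_le_mul_left _ (hq _)).trans <|
          card_filter_apply_eq_mul_card_le_of_dependsOn hC hbt hPt (hg _)
    have hinsert : #{ω : ∀ i, κ i | ∀ s ∈ insert t P, g _ (ω (a s)) = g _ (ω (b s))} =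
        #{ω ∈ C | g _ (ω (a t)) = g _ (ω (b t))} := by
      congr 1; ext ω; simp [C, and_comm]
    rw [hinsert, card_insert_of_notMem ht, pow_succ]
    calc _ = #{ω ∈ C | g _ (ω (a t)) = g _ (ω (b t))} * q * q ^ #P := by ring
      _ ≤ #C * q ^ #P := Nat.mul_le_mul_right _ hhalf
      _ ≤ _ := IH fun s hs ↦ hP s (mem_insert_of_mem hs)

theorem card_filter_map_eq_mul_pow_le {β : Type*} [DecidableEq β] {l₁ l₂ : List ι}
    (h₁ : l₁.Nodup) (h₂ : l₂.Nodup) (hcommon : ∀ x ∈ l₁, x ∈ l₂ → ∀ y ∈ l₁, y ∈ l₂ → x = y)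
    {g : ∀ i, κ i → β} (hg : ∀ i, Injective (g i)) {q : ℕ} (hq : ∀ i, q ≤ Fintype.card (κ i)) :
    #{ω : ∀ i, κ i | l₁.map (fun i ↦ g i (ω i)) = l₂.map (fun i ↦ g i (ω i))} *
      q ^ (l₁.length - 1) ≤ Fintype.card (∀ i, κ i) := by
  by_cases hlen : l₁.length = l₂.length
  swap
  · rw [filter_eq_empty_iff.mpr fun ω _ h ↦ hlen (by simpa using congrArg List.length h)]
    simp
  let a : Fin l₁.length → ι := l₁.get
  let b : Fin l₁.length → ι := fun t ↦ l₂.get (t.cast hlen)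
  have ha : Injective a := List.nodup_iff_injective_get.mp h₁
  have hb : Injective b := (List.nodup_iff_injective_get.mp h₂).comp (Fin.cast_injective hlen)
  have hab : ∀ s t s' t', a s = b t → a s' = b t' → a s = a s' := by
    intro s t s' t' h h'
    have hb' : ∀ t, b t ∈ l₂ := fun t ↦ List.get_mem ..
    exact hcommon _ (List.get_mem ..) (show a s ∈ l₂ by rw [h]; exact hb' t) _ (List.get_mem ..)
      (show a s' ∈ l₂ by rw [h']; exact hb' t')
  let P : Finset (Fin l₁.length) := {t | a t ≠ b t}
  have hP : l₁.length - 1 ≤ #P := by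
    have hdiag : #{t | a t = b t} ≤ 1 := card_le_one.mpr fun s hs t ht ↦
      ha (hab s s t t (by simpa using hs) (by simpa using ht))
    have := card_filter_add_card_filter_not (s := univ) (p := fun t ↦ a t = b t)
    rw [card_univ, Fintype.card_fin] at this
    change _ + #P = _ at this
    omega
  rcases q.eq_zero_or_pos with rfl | hq0
  · calc _ ≤ #{ω : ∀ i, κ i | l₁.map (fun i ↦ g i (ω i)) = l₂.map (fun i ↦ g i (ω i))} * 1 :=
          Nat.mul_le_mul_left _ (pow_le_one₀ (Nat.zero_le _) zero_le_one)
      _ ≤ _ := by rw [mul_one]; exact card_le_univ _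
  refine le_trans ?_ (card_filter_forall_eq_mul_pow_le ha hb hab hg hq P (by simp [P]))
  refine Nat.mul_le_mul (card_le_card fun ω hω ↦ ?_) (pow_le_pow_right₀ hq0 hP)
  simp only [mem_filter, mem_univ, true_and] at hω ⊢
  intro t _
  simpa [a, b] using List.getElem_of_eq hω (i := t) (by simp)

end ProductSpace

section LocalLemma

variable {ι : Type*} {κ : ι → Type*} [Fintype ι] [DecidableEq ι] [∀ i, Fintype (κ i)]
  [∀ i, DecidableEq (κ i)] {J : Type*} (A : J → Finset (∀ i, κ i))

def avoiding (S : Finset J) : Finset (∀ i, κ i) := {ω | ∀ k ∈ S, ω ∉ A k}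

variable {A}

@[simp]
theorem mem_avoiding {S : Finset J} {ω : ∀ i, κ i} : ω ∈ avoiding A S ↔ ∀ k ∈ S, ω ∉ A k := by
  simp [avoiding]

@[simp]
theorem avoiding_empty : avoiding A ∅ = univ := by ext; simp

theorem avoiding_anti {S T : Finset J} (h : S ⊆ T) : avoiding A T ⊆ avoiding A S :=
  fun _ hω ↦ mem_avoiding.2 fun k hk ↦ mem_avoiding.1 hω k (h hk)

theorem dependsOn_avoiding {vbl : J → Set ι} (hA : ∀ j, DependsOn (· ∈ A j) (vbl j))
    (S : Finset J) : DependsOn (· ∈ avoiding A S) (⋃ k ∈ S, vbl k) := by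
  intro ω ω' h
  simp only [mem_avoiding, eq_iff_iff]
  refine forall₂_congr fun k hk ↦ not_congr (iff_of_eq (hA k fun i hi ↦ h i ?_))
  exact Set.mem_biUnion hk hi

variable [DecidableEq J]

theorem avoiding_insert (k : J) (S : Finset J) :
    avoiding A (insert k S) = avoiding A S \ A k := by
  ext; simp [and_comm]

theorem dens_avoiding_insert (k : J) (S : Finset J) :
    ((avoiding A (insert k S)).dens : ℝ) = (avoiding A S).dens - (A k ∩ avoiding A S).dens := by
  rw [avoiding_insert, eq_sub_iff_add_eq, inter_comm]
  exact_mod_cast dens_sdiff_add_dens_inter _ _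

theorem one_sub_mul_le_dens_avoiding_insert {k : J} {S : Finset J} {x : ℝ}
    (h : ((A k ∩ avoiding A S).dens : ℝ) ≤ x * (avoiding A S).dens) :
    (1 - x) * (avoiding A S).dens ≤ (avoiding A (insert k S)).dens := by
  rw [dens_avoiding_insert]
  linarith

theorem prod_one_sub_mul_le_dens_avoiding_union (x : J → ℝ) (R T : Finset J)
    (hx : ∀ k ∈ T, x k ≤ 1)
    (h : ∀ T' ⊆ T, ∀ k ∈ T, k ∉ T' →
      ((A k ∩ avoiding A (R ∪ T')).dens : ℝ) ≤ x k * (avoiding A (R ∪ T')).dens) :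
    (∏ k ∈ T, (1 - x k)) * (avoiding A R).dens ≤ (avoiding A (R ∪ T)).dens := by
  induction T using Finset.induction_on with
  | empty => simp
  | insert k T hk IH =>
    rw [prod_insert hk, union_insert, mul_assoc]
    have hxk : 0 ≤ 1 - x k := sub_nonneg.2 (hx k (mem_insert_self k T))
    calc _ ≤ (1 - x k) * (avoiding A (R ∪ T)).dens :=
          mul_le_mul_of_nonneg_left (IH (fun l hl ↦ hx l (mem_insert_of_mem hl))
            fun T' hT' l hl ↦ h T' (hT'.trans (subset_insert k T)) l (mem_insert_of_mem hl)) hxk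
      _ ≤ _ := one_sub_mul_le_dens_avoiding_insert
          (h T (subset_insert k T) k (mem_insert_self k T) hk)

/-- The induction of the Local Lemma: `A j` is independent of avoiding the events outside `Γ j`,
and avoiding those in `Γ j` as well costs at most a factor `∏ k ∈ Γ j, (1 - x k)`. -/
theorem dens_inter_avoiding_le {vbl : J → Set ι} (hA : ∀ j, DependsOn (· ∈ A j) (vbl j))
    {Γ : J → Finset J} (hΓ : ∀ j k, k ≠ j → k ∉ Γ j → Disjoint (vbl j) (vbl k))
    {x : J → ℝ} (hx0 : ∀ j, 0 ≤ x j) (hx1 : ∀ j, x j ≤ 1)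
    (hAx : ∀ j, ((A j).dens : ℝ) ≤ x j * ∏ k ∈ Γ j, (1 - x k)) (S : Finset J) (j : J) :
    ((A j ∩ avoiding A S).dens : ℝ) ≤ x j * (avoiding A S).dens := by
  induction S using Finset.strongInduction generalizing j with | H S IH => ?_
  by_cases hjS : j ∈ S
  · have : A j ∩ avoiding A S = ∅ := by
      ext ω; simpa using fun hω ↦ ⟨j, hjS, hω⟩
    rw [this, dens_empty, NNRat.cast_zero]
    exact mul_nonneg (hx0 j) (by positivity)
  set N := S.filter (· ∈ Γ j)
  set R := S.filter (· ∉ Γ j)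
  have hRN : R ∪ N = S := by rw [union_comm]; exact filter_union_filter_not_eq _ _
  have hindep : (A j ∩ avoiding A R).dens = (A j).dens * (avoiding A R).dens := by
    refine dens_inter_of_dependsOn (hA j) (dependsOn_avoiding hA R) ?_
    refine Set.disjoint_iUnion₂_right.2 fun k hk ↦ hΓ j k ?_ (mem_filter.1 hk).2
    rintro rfl
    exact hjS (mem_filter.1 hk).1
  have hlower : (∏ k ∈ N, (1 - x k)) * (avoiding A R).dens ≤ (avoiding A S).dens := by
    rw [← hRN]
    refine prod_one_sub_mul_le_dens_avoiding_union x R N (fun k _ ↦ hx1 k)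
      fun T hT k hk hkT ↦ IH _ ?_ k
    rw [← hRN]
    refine (ssubset_iff_of_subset (union_subset_union_right hT)).2 ⟨k, mem_union_right R hk, ?_⟩
    simp only [mem_union, not_or]
    exact ⟨fun hkR ↦ (mem_filter.1 hkR).2 (mem_filter.1 hk).2, hkT⟩
  have hprod : ∏ k ∈ Γ j, (1 - x k) ≤ ∏ k ∈ N, (1 - x k) :=
    prod_le_prod_of_subset_of_le_one (fun k hk ↦ (mem_filter.1 hk).2)
      (fun k _ ↦ sub_nonneg.2 (hx1 k)) fun k _ _ ↦ sub_le_self _ (hx0 k)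
  calc ((A j ∩ avoiding A S).dens : ℝ) ≤ (A j ∩ avoiding A R).dens := by
        gcongr
        exact avoiding_anti (filter_subset _ _)
    _ = (A j).dens * (avoiding A R).dens := by rw [hindep, NNRat.cast_mul]
    _ ≤ x j * (∏ k ∈ Γ j, (1 - x k)) * (avoiding A R).dens := by gcongr; exact hAx j
    _ ≤ x j * (∏ k ∈ N, (1 - x k)) * (avoiding A R).dens := by gcongr; exact hx0 j
    _ ≤ x j * (avoiding A S).dens := by rw [mul_assoc]; gcongr; exact hx0 j

/-- The Lovász Local Lemma for the uniform distribution on a finite product, with events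
`A j` determined by the coordinates in `vbl j`. -/
theorem exists_forall_notMem_of_local_lemma [Fintype J] [∀ i, Nonempty (κ i)] {vbl : J → Set ι}
    (hA : ∀ j, DependsOn (· ∈ A j) (vbl j))
    {Γ : J → Finset J} (hΓ : ∀ j k, k ≠ j → k ∉ Γ j → Disjoint (vbl j) (vbl k))
    {x : J → ℝ} (hx0 : ∀ j, 0 ≤ x j) (hx1 : ∀ j, x j < 1)
    (hAx : ∀ j, ((A j).dens : ℝ) ≤ x j * ∏ k ∈ Γ j, (1 - x k)) :
    ∃ ω, ∀ j, ω ∉ A j := by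
  have h := prod_one_sub_mul_le_dens_avoiding_union x ∅ univ (fun k _ ↦ (hx1 k).le)
    fun T _ k _ _ ↦ dens_inter_avoiding_le hA hΓ hx0 (fun j ↦ (hx1 j).le) hAx _ k
  rw [avoiding_empty, dens_univ, NNRat.cast_one, mul_one, empty_union] at h
  have hpos : (0 : ℝ) < (avoiding A univ).dens :=
    (prod_pos fun k _ ↦ sub_pos.2 (hx1 k)).trans_le h
  obtain ⟨ω, hω⟩ := dens_pos.1 (by exact_mod_cast hpos)
  exact ⟨ω, fun j ↦ mem_avoiding.1 hω j (mem_univ j)⟩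

theorem Real.exp_neg_one_le_one_sub_inv_pow (d : ℕ) : exp (-1) ≤ (1 - ((d : ℝ) + 1)⁻¹) ^ d := by
  rcases d.eq_zero_or_pos with rfl | hd
  · simp
  have hd' : (0 : ℝ) < d := Nat.cast_pos.2 hd
  have h : 1 - ((d : ℝ) + 1)⁻¹ = (1 + (d : ℝ)⁻¹)⁻¹ := by field_simp; ring
  rw [h, inv_pow, Real.exp_neg]
  exact inv_anti₀ (by positivity) Real.one_add_inv_pow_le_exp

theorem exists_forall_notMem_of_symmetric_local_lemma [Fintype J] [∀ i, Nonempty (κ i)]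
    {vbl : J → Set ι} (hA : ∀ j, DependsOn (· ∈ A j) (vbl j))
    {Γ : J → Finset J} (hΓ : ∀ j k, k ≠ j → k ∉ Γ j → Disjoint (vbl j) (vbl k))
    {d : ℕ} (hd : 1 ≤ d) (hΓd : ∀ j, #(Γ j) ≤ d) {p : ℝ} (hAp : ∀ j, ((A j).dens : ℝ) ≤ p)
    (hpd : Real.exp 1 * p * (d + 1) ≤ 1) :
    ∃ ω, ∀ j, ω ∉ A j := by
  have hd' : (1 : ℝ) ≤ d := Nat.one_le_cast.2 hd
  have hx1 : ((d : ℝ) + 1)⁻¹ < 1 := inv_lt_one_of_one_lt₀ (by linarith)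
  refine exists_forall_notMem_of_local_lemma hA hΓ (fun _ ↦ by positivity) (fun _ ↦ hx1) fun j ↦ ?_
  rw [prod_const]
  calc ((A j).dens : ℝ) ≤ p := hAp j
    _ ≤ ((d : ℝ) + 1)⁻¹ * Real.exp (-1) := by
        rw [Real.exp_neg, ← mul_inv, ← one_div, le_div_iff₀ (by positivity)]
        linarith [show p * ((d + 1) * Real.exp 1) = Real.exp 1 * p * (d + 1) by ring]
    _ ≤ ((d : ℝ) + 1)⁻¹ * (1 - ((d : ℝ) + 1)⁻¹) ^ d := by
        gcongr; exact Real.exp_neg_one_le_one_sub_inv_pow d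
    _ ≤ ((d : ℝ) + 1)⁻¹ * (1 - ((d : ℝ) + 1)⁻¹) ^ #(Γ j) := by
        refine mul_le_mul_of_nonneg_left ?_ (by positivity)
        exact pow_le_pow_of_le_one (sub_nonneg.2 hx1.le) (sub_le_self _ (by positivity)) (hΓd j)

end LocalLemma

namespace SimpleGraph

variable [Fintype V] [DecidableEq V] (G : SimpleGraph V) [DecidableRel G.Adj]

theorem card_filter_mem_edgeSet (w : V) :
    #{e : G.edgeSet | w ∈ (e : Sym2 V)} = G.degree w := by
  rw [← G.card_incidenceFinset_eq_degree, ← card_map (Embedding.subtype _)]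
  congr 1
  ext e
  simp [incidenceSet, and_comm]

def outerNeighborFinset (e : Sym2 V) : Finset V := {w | w ∉ e ∧ ∃ a ∈ e, G.Adj a w}

def nearEdges (e : Sym2 V) : Finset G.edgeSet :=
  (G.outerNeighborFinset e).biUnion fun w ↦ {k : G.edgeSet | w ∈ (k : Sym2 V)}

variable {G}

theorem card_outerNeighborFinset_add_two_le {u v : V} (huv : G.Adj u v) :
    #(G.outerNeighborFinset s(u, v)) + 2 ≤ G.degree u + G.degree v := by
  have hsub : G.outerNeighborFinset s(u, v) ⊆
      (G.neighborFinset u).erase v ∪ (G.neighborFinset v).erase u := by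
    intro w hw
    simp only [outerNeighborFinset, mem_filter, mem_univ, true_and, Sym2.mem_iff, not_or,
      exists_eq_or_imp, exists_eq_left] at hw
    obtain ⟨⟨hwu, hwv⟩, hadj | hadj⟩ := hw
    · exact mem_union_left _ (mem_erase.2 ⟨hwv, (G.mem_neighborFinset u w).2 hadj⟩)
    · exact mem_union_right _ (mem_erase.2 ⟨hwu, (G.mem_neighborFinset v w).2 hadj⟩)
  have hu := card_erase_of_mem ((G.mem_neighborFinset u v).2 huv)
  have hv := card_erase_of_mem ((G.mem_neighborFinset v u).2 huv.symm)
  have hdu := (G.degree_pos_iff_exists_adj u).2 ⟨v, huv⟩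
  have hdv := (G.degree_pos_iff_exists_adj v).2 ⟨u, huv.symm⟩
  rw [G.card_neighborFinset_eq_degree] at hu hv
  have := (card_le_card hsub).trans (card_union_le _ _)
  omega

theorem card_nearEdges_le (j : G.edgeSet) :
    #(G.nearEdges j) ≤ G.maxDegree * (2 * G.maxDegree - 2) := by
  obtain ⟨⟨u, v⟩, huv⟩ := j
  have hout := card_outerNeighborFinset_add_two_le (G.mem_edgeSet.1 huv)
  have hu := G.degree_le_maxDegree u
  have hv := G.degree_le_maxDegree v
  calc #(G.nearEdges s(u, v)) ≤ #(G.outerNeighborFinset s(u, v)) * G.maxDegree := by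
        refine card_biUnion_le_card_mul _ _ _ fun w _ ↦ ?_
        rw [card_filter_mem_edgeSet]
        exact G.degree_le_maxDegree w
    _ ≤ G.maxDegree * (2 * G.maxDegree - 2) := by
        rw [mul_comm]
        exact Nat.mul_le_mul_left _ (by omega)

theorem exists_mem_outerNeighborFinset {j k : G.edgeSet} (hkj : k ≠ j) {a b : V}
    (ha : a ∈ (j : Sym2 V)) (hb : b ∈ (k : Sym2 V)) (hab : a = b ∨ G.Adj a b) :
    ∃ w ∈ G.outerNeighborFinset j, w ∈ (k : Sym2 V) := by
  by_cases hbj : b ∈ (j : Sym2 V)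
  · -- the other endpoint of `k` lies outside `j`, as `k ≠ j`
    have hk : s(b, Sym2.Mem.other hb) = k := Sym2.other_spec hb
    have hadj : G.Adj b (Sym2.Mem.other hb) := by rw [← G.mem_edgeSet, hk]; exact k.2
    refine ⟨_, mem_filter.2 ⟨mem_univ _, fun hwj ↦ hkj ?_, b, hbj, hadj⟩, Sym2.other_mem hb⟩
    exact Subtype.ext (hk.symm.trans ((Sym2.mem_and_mem_iff hadj.ne).1 ⟨hbj, hwj⟩).symm)
  · rcases hab with rfl | hab
    · exact (hbj ha).elim
    · exact ⟨b, mem_filter.2 ⟨mem_univ _, hbj, a, ha, hab⟩, hb⟩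

end SimpleGraph

section TotalSequence

variable [Fintype V] [DecidableEq V] {G : SimpleGraph V} [DecidableRel G.Adj]
  {σ : LinearOrder (V ⊕ G.edgeSet)}

theorem mem_incTotal {v : V} {x : V ⊕ G.edgeSet} :
    x ∈ incTotal G σ v ↔ Sum.elim (· = v) (fun e : G.edgeSet ↦ v ∈ (e : Sym2 V)) x := by
  simp [incTotal]

theorem nodup_incTotal (v : V) : (incTotal G σ v).Nodup := sort_nodup _ _

theorem length_incTotal (v : V) : (incTotal G σ v).length = G.degree v + 1 := by
  rw [incTotal, length_sort, card_filter, Fintype.sum_sum_type, ← G.card_filter_mem_edgeSet v,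
    card_filter, add_comm]
  congr 1
  · exact sum_congr rfl fun e _ ↦ by split_ifs <;> simp_all
  · exact (Fintype.sum_eq_single v fun u hu ↦ if_neg hu).trans (if_pos rfl)

theorem totalSeqColor_congr {w w' : V ⊕ G.edgeSet → ℝ} {v : V}
    (h : ∀ x ∈ incTotal G σ v, w x = w' x) : totalSeqColor G σ w v = totalSeqColor G σ w' v :=
  List.map_congr_left h

theorem eq_or_adj_of_mem_incTotal {a b : V} {x : V ⊕ G.edgeSet} (ha : x ∈ incTotal G σ a)
    (hb : x ∈ incTotal G σ b) : a = b ∨ G.Adj a b := by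
  rw [mem_incTotal] at ha hb
  rcases x with w | ⟨f, hf⟩
  · exact .inl (ha.symm.trans hb)
  · by_cases hab : a = b
    · exact .inl hab
    · rw [Sum.elim_inr] at ha hb
      rw [← G.mem_edgeSet, ← (Sym2.mem_and_mem_iff hab).1 ⟨ha, hb⟩]
      exact .inr hf

theorem eq_inr_of_mem_incTotal {u v : V} (huv : G.Adj u v) {x : V ⊕ G.edgeSet}
    (hu : x ∈ incTotal G σ u) (hv : x ∈ incTotal G σ v) : x = .inr ⟨s(u, v), huv⟩ := by
  rw [mem_incTotal] at hu hv
  rcases x with w | ⟨f, hf⟩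
  · exact (huv.ne (hu.symm.trans hv)).elim
  · rw [Sum.elim_inr] at hu hv
    exact congrArg Sum.inr (Subtype.ext ((Sym2.mem_and_mem_iff huv.ne).1 ⟨hu, hv⟩))

variable (σ) in
def totalSupport (e : G.edgeSet) : Set (V ⊕ G.edgeSet) :=
  {x | ∃ u ∈ (e : Sym2 V), x ∈ incTotal G σ u}

theorem disjoint_totalSupport_of_notMem_nearEdges {j k : G.edgeSet} (hkj : k ≠ j)
    (hk : k ∉ G.nearEdges j) : Disjoint (totalSupport σ j) (totalSupport σ k) := by
  refine Set.disjoint_left.2 fun x ⟨a, ha, hxa⟩ ⟨b, hb, hxb⟩ ↦ hk ?_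
  obtain ⟨w, hw, hwk⟩ :=
    G.exists_mem_outerNeighborFinset hkj ha hb (eq_or_adj_of_mem_incTotal hxa hxb)
  exact mem_biUnion.2 ⟨w, hw, mem_filter.2 ⟨mem_univ _, hwk⟩⟩

variable (σ) in
noncomputable def clashEvent (L : V ⊕ G.edgeSet → Finset ℝ) (j : G.edgeSet) :
    Finset (∀ x, L x) :=
  {ω | ∃ u v, s(u, v) = (j : Sym2 V) ∧
    totalSeqColor G σ (fun x ↦ ω x) u = totalSeqColor G σ (fun x ↦ ω x) v}

theorem dependsOn_clashEvent (L : V ⊕ G.edgeSet → Finset ℝ) (j : G.edgeSet) :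
    DependsOn (· ∈ clashEvent σ L j) (totalSupport σ j) := by
  intro ω ω' h
  have hc : ∀ z ∈ (j : Sym2 V), totalSeqColor G σ (fun x ↦ ω x) z =
      totalSeqColor G σ (fun x ↦ ω' x) z := fun z hz ↦
    totalSeqColor_congr fun x hx ↦ congrArg Subtype.val (h x ⟨z, hz, hx⟩)
  simp only [clashEvent, mem_filter, mem_univ, true_and, eq_iff_iff]
  refine exists₂_congr fun u v ↦ and_congr_right fun huv ↦ ?_
  rw [hc u (huv ▸ Sym2.mem_mk_left u v), hc v (huv ▸ Sym2.mem_mk_right u v)]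

theorem card_filter_totalSeqColor_eq_mul_pow_le {L : V ⊕ G.edgeSet → Finset ℝ} {q : ℕ}
    (hL : ∀ x, q ≤ #(L x)) {u v : V} (huv : G.Adj u v) :
    #{ω : ∀ x, L x | totalSeqColor G σ (fun x ↦ ω x) u = totalSeqColor G σ (fun x ↦ ω x) v} *
      q ^ G.degree u ≤ Fintype.card (∀ x, L x) := by
  have hcommon : ∀ x ∈ incTotal G σ u, x ∈ incTotal G σ v → ∀ y ∈ incTotal G σ u,
      y ∈ incTotal G σ v → x = y := fun x hxu hxv y hyu hyv ↦
    (eq_inr_of_mem_incTotal huv hxu hxv).trans (eq_inr_of_mem_incTotal huv hyu hyv).symm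
  have := card_filter_map_eq_mul_pow_le (nodup_incTotal u) (nodup_incTotal v) hcommon
    (g := fun x (r : L x) ↦ (r : ℝ)) (fun x ↦ Subtype.val_injective) (fun x ↦ by simpa using hL x)
  rwa [length_incTotal, Nat.add_sub_cancel] at this

theorem dens_clashEvent_le {L : V ⊕ G.edgeSet → Finset ℝ} (hL : ∀ x, 2 ≤ #(L x))
    (j : G.edgeSet) : ((clashEvent σ L j).dens : ℝ) ≤ (2 ^ G.minDegree)⁻¹ := by
  obtain ⟨⟨u, v⟩, huv⟩ := j
  have hadj : G.Adj u v := G.mem_edgeSet.1 huv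
  have hsub : clashEvent σ L ⟨s(u, v), huv⟩ ⊆ ({ω : ∀ x, L x |
      totalSeqColor G σ (fun x ↦ ω x) u = totalSeqColor G σ (fun x ↦ ω x) v} : Finset _) := by
    intro ω hω
    simp only [clashEvent, mem_filter, mem_univ, true_and] at hω ⊢
    obtain ⟨u', v', he, hc⟩ := hω
    rcases Sym2.eq_iff.1 he with ⟨rfl, rfl⟩ | ⟨rfl, rfl⟩
    exacts [hc, hc.symm]
  have hcard := card_filter_totalSeqColor_eq_mul_pow_le (σ := σ) hL hadj
  have hpow : 2 ^ G.minDegree ≤ 2 ^ G.degree u :=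
    Nat.pow_le_pow_right two_pos (G.minDegree_le_degree u)
  have : ∀ x, Nonempty (L x) := fun x ↦ (card_pos.1 (by have := hL x; omega)).to_subtype
  have hN : (0 : ℝ) < Fintype.card (∀ x, L x) := Nat.cast_pos.2 Fintype.card_pos
  rw [nnratCast_dens, div_le_iff₀ hN, ← div_eq_inv_mul, le_div_iff₀ (by positivity)]
  exact_mod_cast (Nat.mul_le_mul (card_le_card hsub) hpow).trans hcard

end TotalSequence

theorem exp_one_mul_lt_two_pow_of_logb_lt {δ Δ : ℕ}
    (h : Real.logb 2 (Real.exp 1 * (2 * (Δ : ℝ) ^ 2 - 2 * Δ + 1)) < δ) :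
    Real.exp 1 * ((Δ * (2 * Δ - 2) : ℕ) + 1) < 2 ^ δ := by
  have hX : 2 * (Δ : ℝ) ^ 2 - 2 * Δ + 1 = ((Δ * (2 * Δ - 2) : ℕ) : ℝ) + 1 := by
    rcases Δ.eq_zero_or_pos with rfl | hΔ
    · simp
    · rw [Nat.cast_mul, Nat.cast_sub (by omega)]
      push_cast
      ring
  rwa [hX, Real.logb_lt_iff_lt_rpow one_lt_two (by positivity), Real.rpow_natCast] at h

theorem two_le_of_exp_one_mul_lt_two_pow {δ d : ℕ} (h : Real.exp 1 * (d + 1) < 2 ^ δ) :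
    2 ≤ δ := by
  by_contra! hδ
  have h2 : (2 : ℝ) ^ δ ≤ 2 := by interval_cases δ <;> norm_num
  have hd : (1 : ℝ) ≤ d + 1 := by linarith [d.cast_nonneg (α := ℝ)]
  nlinarith [Real.exp_one_gt_d9]

/-- If `δ(G) > log₂(e·(2Δ(G)² − 2Δ(G) + 1))`, then `ch_σ^t(G) ≤ 2`. -/
theorem stmt_9 [Fintype V] [DecidableEq V] (G : SimpleGraph V) [DecidableRel G.Adj]
    (hδ : Real.logb 2 (Real.exp 1 *
        (2 * (G.maxDegree : ℝ) ^ 2 - 2 * (G.maxDegree : ℝ) + 1)) < (G.minDegree : ℝ))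
    (σ : LinearOrder (V ⊕ G.edgeSet))
    (L : V ⊕ G.edgeSet → Finset ℝ) (hL : ∀ x, (L x).card = 2) :
    ∃ w : V ⊕ G.edgeSet → ℝ, (∀ x, w x ∈ L x) ∧ ProperTotalSeq G σ w := by
  have hlt := exp_one_mul_lt_two_pow_of_logb_lt hδ
  have hΔ : 2 ≤ G.maxDegree :=
    (two_le_of_exp_one_mul_lt_two_pow hlt).trans G.minDegree_le_maxDegree
  have : ∀ x, Nonempty (L x) := fun x ↦ (card_pos.1 (by rw [hL x]; norm_num)).to_subtype
  obtain ⟨ω, hω⟩ := exists_forall_notMem_of_symmetric_local_lemma (A := clashEvent σ L)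
    (dependsOn_clashEvent L) (fun _ _ ↦ disjoint_totalSupport_of_notMem_nearEdges)
    (Nat.one_le_iff_ne_zero.2 (Nat.mul_ne_zero (by omega) (by omega))) G.card_nearEdges_le
    (dens_clashEvent_le fun x ↦ (hL x).ge) (by
      rw [mul_right_comm, ← div_eq_mul_inv, div_le_one (by positivity)]
      exact hlt.le)
  exact ⟨fun x ↦ ω x, fun x ↦ (ω x).2, fun u v huv hc ↦
    hω ⟨s(u, v), huv⟩ (mem_filter.2 ⟨mem_univ _, u, v, rfl, hc⟩)⟩
end
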